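/- arXiv:1501.00852 — 6 statements merged into one kernel-verified Lean document; each statement's English description precedes it below -/
import Mathlib

section
/- For k ∈ ℝ, k ≠ 0, the function ψ(ϱ) = sinh(2k√(2ϱ)) − 2k√(2ϱ)·cosh(2k√(2ϱ)) + (8k²/3)·ϱ·sinh(2k√(2ϱ)), defined for ϱ > 0 and extended by ψ(0) = 0, satisfies the ODE ϱ ψ'' − (3/2) ψ' − 2k² ψ = 0 on ϱ > 0 and ψ(ϱ) → 0 as ϱ ↓ 0. -/
/-!
Both claims are statements about the closed form `PPWave.psi k`. On `ϱ > 0` it is built from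
`sinh`, `cosh` and `√(2ϱ)`, so the chain rule (with `√(2ϱ)² = 2ϱ`) gives, for `t = 2k√(2ϱ)`,
`ψ' = -(4k²/3) sinh t + (8k³/3) √(2ϱ) cosh t` and `ψ'' = (16k⁴/3) sinh t`; the ODE is then a
polynomial identity in `ϱ`, `√(2ϱ)`, `sinh t`, `cosh t`. The closed form is continuous on all of
`ℝ` and vanishes at `0`, which gives the limit.
-/

open Real Filter Set

noncomputable section

namespace PPWave

def psi (k ϱ : ℝ) : ℝ :=
  sinh (2 * k * √(2 * ϱ)) - 2 * k * √(2 * ϱ) * cosh (2 * k * √(2 * ϱ))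
    + 8 * k ^ 2 / 3 * ϱ * sinh (2 * k * √(2 * ϱ))

def psiDeriv (k ϱ : ℝ) : ℝ :=
  -(4 * k ^ 2 / 3) * sinh (2 * k * √(2 * ϱ)) + 8 * k ^ 3 / 3 * √(2 * ϱ) * cosh (2 * k * √(2 * ϱ))

def psiDeriv2 (k ϱ : ℝ) : ℝ :=
  16 * k ^ 4 / 3 * sinh (2 * k * √(2 * ϱ))

lemma hasDerivAt_sqrt_two_mul {ϱ : ℝ} (hϱ : 0 < ϱ) :
    HasDerivAt (fun x : ℝ => √(2 * x)) (1 / √(2 * ϱ)) ϱ := by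
  have h := (hasDerivAt_sqrt (by positivity : (2 : ℝ) * ϱ ≠ 0)).comp ϱ
    ((hasDerivAt_id ϱ).const_mul 2)
  refine h.congr_deriv ?_
  have : √(2 * ϱ) ≠ 0 := by positivity
  field_simp

lemma hasDerivAt_psi (k : ℝ) {ϱ : ℝ} (hϱ : 0 < ϱ) :
    HasDerivAt (psi k) (psiDeriv k ϱ) ϱ := by
  have hs := (hasDerivAt_sqrt_two_mul hϱ).const_mul (2 * k)
  have h := (hs.sinh.sub (hs.mul hs.cosh)).add
    (((hasDerivAt_id ϱ).const_mul (8 * k ^ 2 / 3)).mul hs.sinh)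
  refine h.congr_deriv ?_
  have hu0 : √(2 * ϱ) ≠ 0 := by positivity
  have hu2 : √(2 * ϱ) ^ 2 = 2 * ϱ := sq_sqrt (by positivity)
  rw [psiDeriv]
  simp only [id]
  field_simp
  linear_combination (-8 * k ^ 3 * cosh (2 * k * √(2 * ϱ))) * hu2

lemma hasDerivAt_psiDeriv (k : ℝ) {ϱ : ℝ} (hϱ : 0 < ϱ) :
    HasDerivAt (psiDeriv k) (psiDeriv2 k ϱ) ϱ := by
  have hu := hasDerivAt_sqrt_two_mul hϱ
  have hs := hu.const_mul (2 * k)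
  have h := (hs.sinh.const_mul (-(4 * k ^ 2 / 3))).add ((hu.const_mul (8 * k ^ 3 / 3)).mul hs.cosh)
  refine h.congr_deriv ?_
  have hu0 : √(2 * ϱ) ≠ 0 := by positivity
  rw [psiDeriv2]
  field_simp
  ring

lemma psi_ode (k ϱ : ℝ) :
    ϱ * psiDeriv2 k ϱ - 3 / 2 * psiDeriv k ϱ - 2 * k ^ 2 * psi k ϱ = 0 := by
  simp only [psi, psiDeriv, psiDeriv2]
  ring

lemma continuous_psi (k : ℝ) : Continuous (psi k) := by
  unfold psi
  fun_prop

lemma psi_zero (k : ℝ) : psi k 0 = 0 := by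
  simp [psi]

end PPWave

end

open PPWave in
theorem stmt5_general (k : ℝ) (ψ : ℝ → ℝ)
    (hψ : ∀ ϱ : ℝ, 0 < ϱ →
      ψ ϱ = Real.sinh (2 * k * Real.sqrt (2 * ϱ))
        - 2 * k * Real.sqrt (2 * ϱ) * Real.cosh (2 * k * Real.sqrt (2 * ϱ))
        + 8 * k ^ 2 / 3 * ϱ * Real.sinh (2 * k * Real.sqrt (2 * ϱ))) :
    (∀ ϱ : ℝ, 0 < ϱ →
      ϱ * deriv (deriv ψ) ϱ - 3 / 2 * deriv ψ ϱ - 2 * k ^ 2 * ψ ϱ = 0) ∧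
    Tendsto ψ (nhdsWithin 0 (Set.Ioi 0)) (nhds 0) := by
  have hψ_eq : EqOn ψ (psi k) (Ioi 0) := hψ
  have hψ' : EqOn (deriv ψ) (psiDeriv k) (Ioi 0) := fun ϱ hϱ =>
    (hψ_eq.deriv isOpen_Ioi hϱ).trans (hasDerivAt_psi k hϱ).deriv
  have hψ'' : EqOn (deriv (deriv ψ)) (psiDeriv2 k) (Ioi 0) := fun ϱ hϱ =>
    (hψ'.deriv isOpen_Ioi hϱ).trans (hasDerivAt_psiDeriv k hϱ).deriv
  refine ⟨fun ϱ hϱ => ?_, ?_⟩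
  · rw [hψ'' hϱ, hψ' hϱ, hψ_eq hϱ]
    exact psi_ode k ϱ
  · have hlim : Tendsto (psi k) (nhdsWithin 0 (Ioi 0)) (nhds 0) :=
      ((continuous_psi k).tendsto' 0 0 (psi_zero k)).mono_left nhdsWithin_le_nhds
    exact hlim.congr' (eventually_nhdsWithin_of_forall fun ϱ hϱ => (hψ_eq hϱ).symm)

/-- For `k ≠ 0`, the function
`ψ(ϱ) = sinh(2k√(2ϱ)) − 2k√(2ϱ) cosh(2k√(2ϱ)) + (8k²/3) ϱ sinh(2k√(2ϱ))`
(extended by `ψ(0) = 0`) satisfies `ϱ ψ'' − (3/2) ψ' − 2k² ψ = 0` on `ϱ > 0`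
and `ψ(ϱ) → 0` as `ϱ ↓ 0`. -/
theorem stmt5 (k : ℝ) (hk : k ≠ 0) (ψ : ℝ → ℝ)
    (hψ : ∀ ϱ : ℝ, 0 < ϱ →
      ψ ϱ = Real.sinh (2 * k * Real.sqrt (2 * ϱ))
        - 2 * k * Real.sqrt (2 * ϱ) * Real.cosh (2 * k * Real.sqrt (2 * ϱ))
        + 8 * k ^ 2 / 3 * ϱ * Real.sinh (2 * k * Real.sqrt (2 * ϱ)))
    (hψ0 : ψ 0 = 0) :
    (∀ ϱ : ℝ, 0 < ϱ →
      ϱ * deriv (deriv ψ) ϱ - 3 / 2 * deriv ψ ϱ - 2 * k ^ 2 * ψ ϱ = 0) ∧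
    Tendsto ψ (nhdsWithin 0 (Set.Ioi 0)) (nhds 0) :=
  stmt5_general k ψ hψ
end

section
/- Let A, B, C : ℝ² → ℝ be twice continuously differentiable functions of (p, ϱ), and let f : ℝ → ℝ be smooth in p, h_y, h_x, h constants (or smooth functions independent of p, ϱ). Suppose (A,B,C) satisfy the first-order system: B_p = (5/9)A − (2/9)ϱ A_ϱ; B_ϱ = −(1/72)A_p − (1/40)f_{ppp} − (3/20)h_y; C_ϱ = (1/648)A − (1/72)B_p − (1/90)f_{pp} + (2/45)h² − (1/15)(p h_y + h_x); C_p = (1/324)ϱ A_p + (2/3)B + (1/180)ϱ f_{ppp} + (1/30)ϱ h_y. Then A satisfies L A = (9/40) f_{pppp}, where L = 2ϱ ∂²/∂ϱ² − 3 ∂/∂ϱ − (1/8) ∂²/∂p². -/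
open Function

/-- first partial as fderiv applied to (1,0) -/
lemma pd1 {F : ℝ → ℝ → ℝ} (hF : Differentiable ℝ (uncurry F)) (p ϱ : ℝ) :
    HasDerivAt (fun q => F q ϱ) (fderiv ℝ (uncurry F) (p, ϱ) (1, 0)) p := by
  have h1 : HasDerivAt (fun q : ℝ => (q, ϱ)) ((1 : ℝ), (0 : ℝ)) p :=
    (hasDerivAt_id p).prodMk (hasDerivAt_const p ϱ)
  exact ((hF (p, ϱ)).hasFDerivAt).comp_hasDerivAt p h1

/-- second partial as fderiv applied to (0,1) -/
lemma pd2 {F : ℝ → ℝ → ℝ} (hF : Differentiable ℝ (uncurry F)) (p ϱ : ℝ) :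
    HasDerivAt (fun r => F p r) (fderiv ℝ (uncurry F) (p, ϱ) (0, 1)) ϱ := by
  have h1 : HasDerivAt (fun r : ℝ => (p, r)) ((0 : ℝ), (1 : ℝ)) ϱ :=
    (hasDerivAt_const ϱ p).prodMk (hasDerivAt_id ϱ)
  exact ((hF (p, ϱ)).hasFDerivAt).comp_hasDerivAt ϱ h1

lemma mixed1 {F : ℝ → ℝ → ℝ} (hF : ContDiff ℝ 2 (uncurry F)) (p ϱ : ℝ) :
    HasDerivAt (fun r => fderiv ℝ (uncurry F) (p, r) (1, 0))
      (fderiv ℝ (fderiv ℝ (uncurry F)) (p, ϱ) (0, 1) (1, 0)) ϱ := by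
  have hG : Differentiable ℝ (fderiv ℝ (uncurry F)) :=
    (hF.fderiv_right (m := 1) (by norm_num)).differentiable one_ne_zero
  have h1 : HasDerivAt (fun r : ℝ => (p, r)) ((0 : ℝ), (1 : ℝ)) ϱ :=
    (hasDerivAt_const ϱ p).prodMk (hasDerivAt_id ϱ)
  have h2 : HasDerivAt (fun r => fderiv ℝ (uncurry F) (p, r))
      (fderiv ℝ (fderiv ℝ (uncurry F)) (p, ϱ) (0, 1)) ϱ :=
    ((hG (p, ϱ)).hasFDerivAt).comp_hasDerivAt ϱ h1
  have := h2.clm_apply (hasDerivAt_const ϱ ((1 : ℝ), (0 : ℝ)))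
  simpa using this

lemma mixed2 {F : ℝ → ℝ → ℝ} (hF : ContDiff ℝ 2 (uncurry F)) (p ϱ : ℝ) :
    HasDerivAt (fun q => fderiv ℝ (uncurry F) (q, ϱ) (0, 1))
      (fderiv ℝ (fderiv ℝ (uncurry F)) (p, ϱ) (1, 0) (0, 1)) p := by
  have hG : Differentiable ℝ (fderiv ℝ (uncurry F)) :=
    (hF.fderiv_right (m := 1) (by norm_num)).differentiable one_ne_zero
  have h1 : HasDerivAt (fun q : ℝ => (q, ϱ)) ((1 : ℝ), (0 : ℝ)) p :=
    (hasDerivAt_id p).prodMk (hasDerivAt_const p ϱ)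
  have h2 : HasDerivAt (fun q => fderiv ℝ (uncurry F) (q, ϱ))
      (fderiv ℝ (fderiv ℝ (uncurry F)) (p, ϱ) (1, 0)) p :=
    ((hG (p, ϱ)).hasFDerivAt).comp_hasDerivAt p h1
  have := h2.clm_apply (hasDerivAt_const p ((0 : ℝ), (1 : ℝ)))
  simpa using this

/-- If `(A,B,C)` (C² functions of `(p,ϱ)`) solve the first-order system (1sys),
then `A` solves `2ϱ A_ϱϱ − 3 A_ϱ − (1/8) A_pp = (9/40) f_pppp`. -/
theorem stmt7 (A B C : ℝ → ℝ → ℝ)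
    (hA : ContDiff ℝ 2 (Function.uncurry A))
    (hB : ContDiff ℝ 2 (Function.uncurry B))
    (hC : ContDiff ℝ 2 (Function.uncurry C))
    (f : ℝ → ℝ) (hf : ContDiff ℝ (⊤ : ℕ∞) f) (hy hx h : ℝ)
    (e1 : ∀ p ϱ : ℝ, deriv (fun q => B q ϱ) p
      = 5 / 9 * A p ϱ - 2 / 9 * ϱ * deriv (A p) ϱ)
    (e2 : ∀ p ϱ : ℝ, deriv (B p) ϱ
      = -(1 / 72) * deriv (fun q => A q ϱ) p - 1 / 40 * deriv^[3] f p - 3 / 20 * hy)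
    (e3 : ∀ p ϱ : ℝ, deriv (C p) ϱ
      = 1 / 648 * A p ϱ - 1 / 72 * deriv (fun q => B q ϱ) p - 1 / 90 * deriv^[2] f p
        + 2 / 45 * h ^ 2 - 1 / 15 * (p * hy + hx))
    (e4 : ∀ p ϱ : ℝ, deriv (fun q => C q ϱ) p
      = 1 / 324 * ϱ * deriv (fun q => A q ϱ) p + 2 / 3 * B p ϱ
        + 1 / 180 * ϱ * deriv^[3] f p + 1 / 30 * ϱ * hy) :
    ∀ p ϱ : ℝ,
      2 * ϱ * deriv (deriv (A p)) ϱ - 3 * deriv (A p) ϱ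
        - 1 / 8 * deriv (fun q => deriv (fun q' => A q' ϱ) q) p
      = 9 / 40 * deriv^[4] f p := by
  intro p ϱ
  have hAd : Differentiable ℝ (uncurry A) := hA.differentiable (by norm_num)
  have hBd : Differentiable ℝ (uncurry B) := hB.differentiable (by norm_num)
  -- rewrite partials of A as fderiv
  have dA1 : ∀ q r : ℝ, deriv (fun q' => A q' r) q = fderiv ℝ (uncurry A) (q, r) (1, 0) :=
    fun q r => (pd1 hAd q r).deriv
  have dA2 : ∀ q r : ℝ, deriv (A q) r = fderiv ℝ (uncurry A) (q, r) (0, 1) :=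
    fun q r => (pd2 hAd q r).deriv
  -- LHS of mixed-partial identity: ∂ϱ (B_p)
  -- Using e1: B_p (p,·) = 5/9 A p · - 2/9 · A_ϱ(p,·)
  have hA2ϱ : HasDerivAt (fun r => deriv (A p) r) (deriv (deriv (A p)) ϱ) ϱ := by
    have hAp : ContDiff ℝ 2 (A p) := hA.comp (contDiff_prodMk_right p)
    have hAp' : ContDiff ℝ (1 + 1) (A p) := by
      rw [one_add_one_eq_two]; exact hAp
    have : Differentiable ℝ (deriv (A p)) :=
      (contDiff_succ_iff_deriv.mp hAp').2.2.differentiable one_ne_zero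
    exact (this ϱ).hasDerivAt
  have hAϱ : HasDerivAt (fun r => A p r) (deriv (A p) ϱ) ϱ := by
    have : Differentiable ℝ (A p) := (hA.comp (contDiff_prodMk_right p)).differentiable (by norm_num)
    exact (this ϱ).hasDerivAt
  have hL : HasDerivAt (fun r => deriv (fun q => B q r) p)
      (5 / 9 * deriv (A p) ϱ - (2 / 9 * deriv (A p) ϱ + 2 / 9 * ϱ * deriv (deriv (A p)) ϱ)) ϱ := by
    have h1 : HasDerivAt (fun r => 5 / 9 * A p r - 2 / 9 * r * deriv (A p) r)
        (5 / 9 * deriv (A p) ϱ - (2 / 9 * deriv (A p) ϱ + 2 / 9 * ϱ * deriv (deriv (A p)) ϱ)) ϱ := by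
      have h2 := (hAϱ.const_mul (5 / 9 : ℝ)).sub
        ((((hasDerivAt_id ϱ).const_mul (2 / 9 : ℝ)).mul hA2ϱ))
      refine h2.congr_deriv ?_
      simp only [id_eq]; ring
    exact h1.congr_of_eventuallyEq (Filter.Eventually.of_forall fun r => (e1 p r))
  -- ∂p (B_ϱ)
  have hApp : HasDerivAt (fun q => deriv (fun q' => A q' ϱ) q)
      (deriv (fun q => deriv (fun q' => A q' ϱ) q) p) p := by
    have hAr : ContDiff ℝ 2 (fun q => A q ϱ) := hA.comp (contDiff_prodMk_left ϱ)
    have hAr' : ContDiff ℝ (1 + 1) (fun q => A q ϱ) := by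
      rw [one_add_one_eq_two]; exact hAr
    have : Differentiable ℝ (deriv (fun q => A q ϱ)) :=
      (contDiff_succ_iff_deriv.mp hAr').2.2.differentiable one_ne_zero
    exact (this p).hasDerivAt
  have hf3 : HasDerivAt (deriv^[3] f) (deriv^[4] f p) p := by
    have h3 : Differentiable ℝ (deriv^[3] f) :=
      (ContDiff.iterate_deriv 3 (hf.of_le (by simp))).differentiable (by norm_num)
    have : deriv^[4] f p = deriv (deriv^[3] f) p := by
      rw [Function.iterate_succ_apply']
    rw [this]
    exact (h3 p).hasDerivAt
  have hR : HasDerivAt (fun q => deriv (B q) ϱ)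
      (-(1 / 72) * deriv (fun q => deriv (fun q' => A q' ϱ) q) p - 1 / 40 * deriv^[4] f p) p := by
    have h1 : HasDerivAt
        (fun q => -(1 / 72) * deriv (fun q' => A q' ϱ) q - 1 / 40 * deriv^[3] f q - 3 / 20 * hy)
        (-(1 / 72) * deriv (fun q => deriv (fun q' => A q' ϱ) q) p - 1 / 40 * deriv^[4] f p) p := by
      have h2 := ((hApp.const_mul (-(1 / 72) : ℝ)).sub (hf3.const_mul (1 / 40 : ℝ))).sub
        (hasDerivAt_const p (3 / 20 * hy))
      refine h2.congr_deriv ?_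
      ring
    exact h1.congr_of_eventuallyEq (Filter.Eventually.of_forall fun q => (e2 q ϱ))
  -- equality of mixed partials of B
  have hLB : deriv (fun r => deriv (fun q => B q r) p) ϱ
      = fderiv ℝ (fderiv ℝ (uncurry B)) (p, ϱ) (0, 1) (1, 0) := by
    have h1 : (fun r => deriv (fun q => B q r) p) = fun r => fderiv ℝ (uncurry B) (p, r) (1, 0) := by
      funext r; exact (pd1 hBd p r).deriv
    rw [h1]; exact (mixed1 hB p ϱ).deriv
  have hRB : deriv (fun q => deriv (B q) ϱ) p
      = fderiv ℝ (fderiv ℝ (uncurry B)) (p, ϱ) (1, 0) (0, 1) := by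
    have h1 : (fun q => deriv (B q) ϱ) = fun q => fderiv ℝ (uncurry B) (q, ϱ) (0, 1) := by
      funext q; exact (pd2 hBd q ϱ).deriv
    rw [h1]; exact (mixed2 hB p ϱ).deriv
  have hsymm : fderiv ℝ (fderiv ℝ (uncurry B)) (p, ϱ) (0, 1) (1, 0)
      = fderiv ℝ (fderiv ℝ (uncurry B)) (p, ϱ) (1, 0) (0, 1) :=
    (hB.contDiffAt.isSymmSndFDerivAt (by norm_num)) _ _
  have key : 5 / 9 * deriv (A p) ϱ - (2 / 9 * deriv (A p) ϱ + 2 / 9 * ϱ * deriv (deriv (A p)) ϱ)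
      = -(1 / 72) * deriv (fun q => deriv (fun q' => A q' ϱ) q) p - 1 / 40 * deriv^[4] f p := by
    rw [← hL.deriv, ← hR.deriv, hLB, hRB, hsymm]
  linarith
end

section
/- Define A(p,ϱ) = (3/5) ∑_{k=1}^∞ [(2k−1)(2k−3) / (2^{2k}(2k)!)] · f^{(2k+2)}(p) · ϱ^k, where f : ℝ → ℝ is a polynomial in p (so the sum is finite). Then A satisfies the linear PDE 2ϱ A_{ϱϱ} − 3A_ϱ − (1/8)A_{pp} = (9/40) f^{(4)}(p). -/
private lemma coeffId (j : ℕ) :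
    ((2 * ((j:ℝ)+1) + 1) * (2 * ((j:ℝ)+1) - 1)
        / ((2:ℝ) ^ (2 * (j+2)) * (Nat.factorial (2 * (j+2)) : ℝ)))
      * (((j:ℝ)+2) * (2*(j:ℝ) - 1))
    = ((2 * (j:ℝ) + 1) * (2 * (j:ℝ) - 1)
        / ((2:ℝ) ^ (2 * (j+1)) * (Nat.factorial (2 * (j+1)) : ℝ))) / 8 := by
  have h1 : 2 * (j+2) = (2*(j+1)) + 1 + 1 := by ring
  rw [h1, Nat.factorial_succ, Nat.factorial_succ]
  have h2 : ((2:ℝ)) ^ (2*(j+1)+1+1) = 4 * 2 ^ (2*(j+1)) := by ring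
  rw [h2]
  have hfac : ((Nat.factorial (2*(j+1)) : ℝ)) ≠ 0 := by positivity
  have hpow : ((2:ℝ)) ^ (2*(j+1)) ≠ 0 := by positivity
  push_cast
  field_simp
  ring

/-- For `f` a polynomial (some iterated derivative vanishes identically), the series
`A(p,ϱ) = (3/5) ∑_{k≥1} (2k−1)(2k−3)/(2^{2k}(2k)!) · f^{(2k+2)}(p) ϱ^k`
solves `2ϱ A_ϱϱ − 3 A_ϱ − (1/8) A_pp = (9/40) f⁗(p)`. -/
theorem stmt9 (f : ℝ → ℝ) (hf : ContDiff ℝ (⊤ : ℕ∞) f) (N : ℕ) (hN : deriv^[N] f = 0)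
    (A : ℝ → ℝ → ℝ)
    (hA : ∀ p ϱ : ℝ, A p ϱ = 3 / 5 * ∑' k : ℕ,
      ((2 * (k : ℝ) + 1) * (2 * (k : ℝ) - 1)
        / ((2 : ℝ) ^ (2 * (k + 1)) * (Nat.factorial (2 * (k + 1)) : ℝ)))
      * deriv^[2 * (k + 1) + 2] f p * ϱ ^ (k + 1)) :
    ∀ p ϱ : ℝ,
      2 * ϱ * deriv (deriv (A p)) ϱ - 3 * deriv (A p) ϱ
        - 1 / 8 * deriv (fun q => deriv (fun q' => A q' ϱ) q) p
      = 9 / 40 * deriv^[4] f p := by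
  -- iterated derivatives past N vanish
  have hzero' : ∀ j : ℕ, deriv^[N + j] f = 0 := by
    intro j
    induction j with
    | zero => simpa using hN
    | succ j ih =>
      have h : N + (j+1) = (N + j) + 1 := by ring
      rw [h, Function.iterate_succ_apply', ih]
      funext x
      show deriv (fun _ => (0:ℝ)) x = 0
      exact deriv_const x 0
  have hzero : ∀ m : ℕ, N ≤ m → deriv^[m] f = 0 := by
    intro m hm
    obtain ⟨j, rfl⟩ := Nat.exists_eq_add_of_le hm
    exact hzero' j
  -- all iterated derivatives are smooth and have derivatives
  have hsm : ∀ m : ℕ, ContDiff ℝ (⊤ : ℕ∞) (deriv^[m] f) := fun m =>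
    (hf.of_le (mod_cast le_top)).iterate_deriv m
  have hder : ∀ (m : ℕ) (q : ℝ), HasDerivAt (deriv^[m] f) (deriv^[m+1] f q) q := by
    intro m q
    have h1 := (((hsm m).differentiable (by simp)) q).hasDerivAt
    rwa [Function.iterate_succ_apply']
  set M := N + 1 with hM
  -- abbreviations
  set c : ℕ → ℝ := fun k =>
    ((2 * (k : ℝ) + 1) * (2 * (k : ℝ) - 1)
        / ((2 : ℝ) ^ (2 * (k + 1)) * (Nat.factorial (2 * (k + 1)) : ℝ))) with hc
  -- A as a finite sum
  have hA' : ∀ p ϱ : ℝ, A p ϱ = 3 / 5 * ∑ k ∈ Finset.range M,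
      c k * deriv^[2 * (k + 1) + 2] f p * ϱ ^ (k + 1) := by
    intro p ϱ
    rw [hA p ϱ]
    congr 1
    apply tsum_eq_sum
    intro k hk
    have hk' : M ≤ k := by simpa using hk
    have : deriv^[2 * (k + 1) + 2] f = 0 := hzero _ (by omega)
    rw [this]
    simp
  intro p ϱ
  -- first ϱ-derivative
  have hAρ : ∀ r : ℝ, HasDerivAt (A p)
      (3 / 5 * ∑ k ∈ Finset.range M,
        c k * deriv^[2 * (k + 1) + 2] f p * (((k:ℝ)+1) * r ^ k)) r := by
    intro r
    have hfun : A p = fun r => 3 / 5 * ∑ k ∈ Finset.range M,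
        c k * deriv^[2 * (k + 1) + 2] f p * r ^ (k + 1) := funext (hA' p)
    rw [hfun]
    apply HasDerivAt.const_mul
    apply HasDerivAt.fun_sum
    intro k _
    have h := (hasDerivAt_pow (k+1) r).const_mul (c k * deriv^[2 * (k + 1) + 2] f p)
    simpa using h
  have hD1 : deriv (A p) = fun r => 3 / 5 * ∑ k ∈ Finset.range M,
      c k * deriv^[2 * (k + 1) + 2] f p * (((k:ℝ)+1) * r ^ k) :=
    funext fun r => (hAρ r).deriv
  -- second ϱ-derivative
  have hAρρ : HasDerivAt (deriv (A p))
      (3 / 5 * ∑ k ∈ Finset.range M,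
        c k * deriv^[2 * (k + 1) + 2] f p * (((k:ℝ)+1) * ((k:ℝ) * ϱ ^ (k-1)))) ϱ := by
    rw [hD1]
    apply HasDerivAt.const_mul
    apply HasDerivAt.fun_sum
    intro k _
    have h := ((hasDerivAt_pow k ϱ).const_mul ((k:ℝ)+1)).const_mul
      (c k * deriv^[2 * (k + 1) + 2] f p)
    simpa using h
  -- first p-derivative
  have hP1 : ∀ q : ℝ, HasDerivAt (fun q' => A q' ϱ)
      (∑ k ∈ Finset.range M,
        c k * ϱ ^ (k + 1) * deriv^[2 * (k + 1) + 3] f q * (3/5)) q := by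
    intro q
    have hfun : (fun q' => A q' ϱ) = fun q' => ∑ k ∈ Finset.range M,
        c k * ϱ ^ (k + 1) * deriv^[2 * (k + 1) + 2] f q' * (3/5) := by
      funext q'
      rw [hA' q' ϱ, Finset.mul_sum]
      apply Finset.sum_congr rfl
      intro k _
      ring
    rw [hfun]
    apply HasDerivAt.fun_sum
    intro k _
    exact (((hder (2 * (k + 1) + 2) q).const_mul (c k * ϱ ^ (k + 1))).mul_const (3/5))
  have hP1' : deriv (fun q' => A q' ϱ) = fun q => ∑ k ∈ Finset.range M,
      c k * ϱ ^ (k + 1) * deriv^[2 * (k + 1) + 3] f q * (3/5) :=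
    funext fun q => (hP1 q).deriv
  -- second p-derivative
  have hP2 : HasDerivAt (fun q => deriv (fun q' => A q' ϱ) q)
      (∑ k ∈ Finset.range M,
        c k * ϱ ^ (k + 1) * deriv^[2 * (k + 1) + 4] f p * (3/5)) p := by
    rw [hP1']
    apply HasDerivAt.fun_sum
    intro k _
    have h := ((hder (2 * (k + 1) + 3) p).const_mul (c k * ϱ ^ (k + 1))).mul_const (3/5)
    have he : 2 * (k + 1) + 3 + 1 = 2 * (k + 1) + 4 := by ring
    rwa [he] at h
  -- substitute everything
  rw [hAρρ.deriv, hP2.deriv, hD1]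
  -- combine the two ϱ-derivative sums termwise
  have key1 : 2 * ϱ * (3 / 5 * ∑ k ∈ Finset.range M,
        c k * deriv^[2 * (k + 1) + 2] f p * (((k:ℝ)+1) * ((k:ℝ) * ϱ ^ (k-1))))
      - 3 * (3 / 5 * ∑ k ∈ Finset.range M,
        c k * deriv^[2 * (k + 1) + 2] f p * (((k:ℝ)+1) * ϱ ^ k))
      = ∑ k ∈ Finset.range M,
        (3/5) * c k * deriv^[2 * (k + 1) + 2] f p * ((((k:ℝ)+1) * (2*(k:ℝ)-3)) * ϱ ^ k) := by
    rw [Finset.mul_sum, Finset.mul_sum, Finset.mul_sum, Finset.mul_sum, ← Finset.sum_sub_distrib]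
    apply Finset.sum_congr rfl
    intro k _
    rcases k with _ | j
    · push_cast; ring
    · have : ϱ ^ (j + 1) = ϱ * ϱ ^ (j + 1 - 1) := by
        rw [Nat.add_sub_cancel, pow_succ]; ring
      rw [this]
      push_cast
      ring
  rw [key1]
  -- split off the k = 0 term of the first sum, and the k = N term of the second sum
  rw [hM, Finset.sum_range_succ', Finset.sum_range_succ]
  -- last term of the p-derivative sum vanishes
  have hlast : deriv^[2 * (N + 1) + 4] f p = 0 := by
    rw [hzero _ (by omega)]; rfl
  rw [hlast]
  -- evaluate the k = 0 term
  have hc0 : c 0 = -(1/8) := by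
    rw [hc]; norm_num [Nat.factorial]
  have h04 : deriv^[2 * (0 + 1) + 2] f p = deriv^[4] f p := by norm_num
  -- termwise cancellation between the remaining sums
  have key2 : ∀ j ∈ Finset.range N,
      3/5 * c (j+1) * deriv^[2 * (j + 1 + 1) + 2] f p
          * ((((j+1:ℕ):ℝ)+1) * (2*(((j+1:ℕ)):ℝ)-3) * ϱ ^ (j+1))
      = 1/8 * (c j * ϱ ^ (j + 1) * deriv^[2 * (j + 1) + 4] f p * (3/5)) := by
    intro j _
    push_cast
    have hidx : 2 * ((j+1) + 1) + 2 = 2 * (j + 1) + 4 := by ring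
    rw [hidx]
    have hcid := coeffId j
    have hc1 : c (j+1) * (((j:ℝ)+2) * (2*(j:ℝ) - 1)) = c j / 8 := by
      rw [hc]
      push_cast
      push_cast at hcid
      convert hcid using 3
    have : ((((j:ℝ)+1)+1) * (2*(((j:ℝ))+1)-3)) = (((j:ℝ)+2) * (2*(j:ℝ) - 1)) := by ring
    rw [this]
    calc (3/5) * c (j+1) * deriv^[2 * (j + 1) + 4] f p
          * ((((j:ℝ)+2) * (2*(j:ℝ) - 1)) * ϱ ^ (j+1))
        = (c (j+1) * (((j:ℝ)+2) * (2*(j:ℝ) - 1))) * ((3/5) * deriv^[2 * (j + 1) + 4] f p * ϱ ^ (j+1)) := by ring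
      _ = (c j / 8) * ((3/5) * deriv^[2 * (j + 1) + 4] f p * ϱ ^ (j+1)) := by rw [hc1]
      _ = 1/8 * (c j * ϱ ^ (j + 1) * deriv^[2 * (j + 1) + 4] f p * (3/5)) := by ring
  rw [Finset.sum_congr rfl key2, h04, hc0, ← Finset.mul_sum]
  push_cast
  ring
end

section
/- Define B(p,ϱ) = −(1/15) ∑_{k=1}^∞ [(2k−1)(2k−3)(2k−5)/(2^{2k}(2k)!)] f^{(2k+1)}(p) ϱ^k and A(p,ϱ) = (3/5) ∑_{k=1}^∞ [(2k−1)(2k−3)/(2^{2k}(2k)!)] f^{(2k+2)}(p) ϱ^k for f a polynomial. Then 2ϱ B_{ϱϱ} − 3B_ϱ − (1/8)B_{pp} = −(1/36)A_p + (3/40) f^{(3)}(p). -/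
open Finset

/-- coefficient for B -/
noncomputable def stmt10cB (k : ℕ) : ℝ :=
  -(1 / 15) * ((2 * (k : ℝ) + 1) * (2 * (k : ℝ) - 1) * (2 * (k : ℝ) - 3)
    / ((2 : ℝ) ^ (2 * (k + 1)) * (Nat.factorial (2 * (k + 1)) : ℝ)))

/-- coefficient for A -/
noncomputable def stmt10cA (k : ℕ) : ℝ :=
  3 / 5 * ((2 * (k : ℝ) + 1) * (2 * (k : ℝ) - 1)
    / ((2 : ℝ) ^ (2 * (k + 1)) * (Nat.factorial (2 * (k + 1)) : ℝ)))

lemma stmt10_deriv_zero : ∀ j : ℕ, deriv^[j] (0 : ℝ → ℝ) = 0 := by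
  intro j
  induction j with
  | zero => rfl
  | succ n ih =>
    rw [Function.iterate_succ_apply', ih]
    ext x
    rw [show (0 : ℝ → ℝ) = fun _ => (0 : ℝ) from rfl]
    simp

lemma stmt10_iter_zero (f : ℝ → ℝ) (N : ℕ) (hN : deriv^[N] f = 0) {m : ℕ} (hm : N ≤ m) :
    deriv^[m] f = 0 := by
  obtain ⟨j, rfl⟩ := Nat.exists_eq_add_of_le hm
  rw [add_comm, Function.iterate_add_apply, hN, stmt10_deriv_zero]

lemma stmt10_coef (k : ℕ) :
    stmt10cB (k + 1) * (((k : ℝ) + 2) * (2 * (k : ℝ) - 1)) - 1 / 8 * stmt10cB k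
      = -(1 / 36) * stmt10cA k := by
  have h1 : ((Nat.factorial (2 * (k + 1 + 1))) : ℝ)
      = (2 * (k : ℝ) + 4) * (2 * (k : ℝ) + 3) * (Nat.factorial (2 * (k + 1)) : ℝ) := by
    have : 2 * (k + 1 + 1) = (2 * (k + 1) + 1) + 1 := by ring
    rw [this, Nat.factorial_succ, Nat.factorial_succ]
    push_cast
    ring
  have h2 : (2 : ℝ) ^ (2 * (k + 1 + 1)) = 4 * (2 : ℝ) ^ (2 * (k + 1)) := by
    have : 2 * (k + 1 + 1) = 2 * (k + 1) + 2 := by ring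
    rw [this, pow_add]; ring
  have hfac : ((Nat.factorial (2 * (k + 1))) : ℝ) ≠ 0 := by
    exact_mod_cast Nat.factorial_ne_zero _
  have hpow : ((2 : ℝ)) ^ (2 * (k + 1)) ≠ 0 := by positivity
  rw [stmt10cB, stmt10cB, stmt10cA, h1, h2]
  push_cast
  field_simp
  ring

/-- For `f` a polynomial, with
`A(p,ϱ) = (3/5) ∑_{k≥1} (2k−1)(2k−3)/(2^{2k}(2k)!) f^{(2k+2)}(p) ϱ^k` and
`B(p,ϱ) = −(1/15) ∑_{k≥1} (2k−1)(2k−3)(2k−5)/(2^{2k}(2k)!) f^{(2k+1)}(p) ϱ^k`,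
one has `2ϱ B_ϱϱ − 3 B_ϱ − (1/8) B_pp = −(1/36) A_p + (3/40) f'''(p)`. -/
theorem stmt10 (f : ℝ → ℝ) (hf : ContDiff ℝ (⊤ : ℕ∞) f) (N : ℕ) (hN : deriv^[N] f = 0)
    (A B : ℝ → ℝ → ℝ)
    (hA : ∀ p ϱ : ℝ, A p ϱ = 3 / 5 * ∑' k : ℕ,
      ((2 * (k : ℝ) + 1) * (2 * (k : ℝ) - 1)
        / ((2 : ℝ) ^ (2 * (k + 1)) * (Nat.factorial (2 * (k + 1)) : ℝ)))
      * deriv^[2 * (k + 1) + 2] f p * ϱ ^ (k + 1))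
    (hB : ∀ p ϱ : ℝ, B p ϱ = -(1 / 15) * ∑' k : ℕ,
      ((2 * (k : ℝ) + 1) * (2 * (k : ℝ) - 1) * (2 * (k : ℝ) - 3)
        / ((2 : ℝ) ^ (2 * (k + 1)) * (Nat.factorial (2 * (k + 1)) : ℝ)))
      * deriv^[2 * (k + 1) + 1] f p * ϱ ^ (k + 1)) :
    ∀ p ϱ : ℝ,
      2 * ϱ * deriv (deriv (B p)) ϱ - 3 * deriv (B p) ϱ
        - 1 / 8 * deriv (fun q => deriv (fun q' => B q' ϱ) q) p
      = -(1 / 36) * deriv (fun q => A q ϱ) p + 3 / 40 * deriv^[3] f p := by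
  intro p ϱ
  -- notation
  set g : ℕ → ℝ → ℝ := fun m => deriv^[m] f with hg
  have hzero : ∀ m, N ≤ m → ∀ x : ℝ, g m x = 0 := by
    intro m hm x
    rw [hg]
    simp only
    rw [stmt10_iter_zero f N hN hm]
    rfl
  have hsmooth : ∀ m, ContDiff ℝ (⊤ : ℕ∞) (g m) := fun m =>
    ContDiff.iterate_deriv m (hf.of_le (mod_cast le_top))
  have hgd : ∀ m (x : ℝ), HasDerivAt (g m) (g (m + 1) x) x := by
    intro m x
    have h1 : DifferentiableAt ℝ (g m) x :=
      ((hsmooth m).differentiable (by simp)).differentiableAt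
    have := h1.hasDerivAt
    rwa [show deriv (g m) x = g (m + 1) x by
      rw [hg]; simp only; rw [Function.iterate_succ_apply']] at this
  -- finite-sum forms
  have hBfin : ∀ q ρ : ℝ, B q ρ = ∑ k ∈ range N, stmt10cB k * g (2 * k + 3) q * ρ ^ (k + 1) := by
    intro q ρ
    rw [hB q ρ]
    rw [tsum_eq_sum (s := range N) (by
      intro k hk
      have hk' : N ≤ 2 * (k + 1) + 1 := by
        simp only [mem_range, not_lt] at hk; omega
      rw [show deriv^[2 * (k + 1) + 1] f q = g (2 * (k + 1) + 1) q from rfl,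
        hzero _ hk']
      ring)]
    rw [Finset.mul_sum]
    refine Finset.sum_congr rfl fun k _ => ?_
    rw [stmt10cB]
    rw [show 2 * (k + 1) + 1 = 2 * k + 3 by ring]
    ring
  have hAfin : ∀ q ρ : ℝ, A q ρ = ∑ k ∈ range N, stmt10cA k * g (2 * k + 4) q * ρ ^ (k + 1) := by
    intro q ρ
    rw [hA q ρ]
    rw [tsum_eq_sum (s := range N) (by
      intro k hk
      have hk' : N ≤ 2 * (k + 1) + 2 := by
        simp only [mem_range, not_lt] at hk; omega
      rw [show deriv^[2 * (k + 1) + 2] f q = g (2 * (k + 1) + 2) q from rfl,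
        hzero _ hk']
      ring)]
    rw [Finset.mul_sum]
    refine Finset.sum_congr rfl fun k _ => ?_
    rw [stmt10cA]
    rw [show 2 * (k + 1) + 2 = 2 * k + 4 by ring]
    ring
  -- first ϱ-derivative
  have hBp : B p = fun ρ => ∑ k ∈ range N, stmt10cB k * g (2 * k + 3) p * ρ ^ (k + 1) :=
    funext fun ρ => hBfin p ρ
  have hd1 : ∀ ρ : ℝ, HasDerivAt (B p)
      (∑ k ∈ range N, stmt10cB k * g (2 * k + 3) p * (((k : ℝ) + 1) * ρ ^ k)) ρ := by
    intro ρ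
    rw [hBp]
    refine HasDerivAt.fun_sum fun k _ => ?_
    have := (hasDerivAt_pow (k + 1) ρ).const_mul (stmt10cB k * g (2 * k + 3) p)
    simp only [Nat.cast_add, Nat.cast_one, Nat.add_sub_cancel] at this
    convert this using 1
  have hd1' : deriv (B p)
      = fun ρ => ∑ k ∈ range N, stmt10cB k * g (2 * k + 3) p * (((k : ℝ) + 1) * ρ ^ k) :=
    funext fun ρ => (hd1 ρ).deriv
  -- second ϱ-derivative
  have hd2 : deriv (deriv (B p)) ϱ
      = ∑ k ∈ range N, stmt10cB k * g (2 * k + 3) p * (((k : ℝ) + 1) * ((k : ℝ) * ϱ ^ (k - 1))) := by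
    rw [hd1']
    refine HasDerivAt.deriv ?_
    refine HasDerivAt.fun_sum fun k _ => ?_
    have := ((hasDerivAt_pow k ϱ).const_mul ((k : ℝ) + 1)).const_mul
      (stmt10cB k * g (2 * k + 3) p)
    convert this using 1
  -- p-derivatives of B
  have hdp1 : ∀ q : ℝ, deriv (fun q' => B q' ϱ) q
      = ∑ k ∈ range N, stmt10cB k * g (2 * k + 4) q * ϱ ^ (k + 1) := by
    intro q
    have heq : (fun q' => B q' ϱ)
        = fun q' => ∑ k ∈ range N, stmt10cB k * g (2 * k + 3) q' * ϱ ^ (k + 1) :=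
      funext fun q' => hBfin q' ϱ
    rw [heq]
    refine HasDerivAt.deriv ?_
    refine HasDerivAt.fun_sum fun k _ => ?_
    have := (((hgd (2 * k + 3) q).const_mul (stmt10cB k)).mul_const (ϱ ^ (k + 1)))
    convert this using 2
  have hdp2 : deriv (fun q => deriv (fun q' => B q' ϱ) q) p
      = ∑ k ∈ range N, stmt10cB k * g (2 * k + 5) p * ϱ ^ (k + 1) := by
    have heq : (fun q => deriv (fun q' => B q' ϱ) q)
        = fun q => ∑ k ∈ range N, stmt10cB k * g (2 * k + 4) q * ϱ ^ (k + 1) :=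
      funext fun q => hdp1 q
    rw [heq]
    refine HasDerivAt.deriv ?_
    refine HasDerivAt.fun_sum fun k _ => ?_
    have := (((hgd (2 * k + 4) p).const_mul (stmt10cB k)).mul_const (ϱ ^ (k + 1)))
    convert this using 2
  -- p-derivative of A
  have hdpA : deriv (fun q => A q ϱ) p
      = ∑ k ∈ range N, stmt10cA k * g (2 * k + 5) p * ϱ ^ (k + 1) := by
    have heq : (fun q => A q ϱ)
        = fun q => ∑ k ∈ range N, stmt10cA k * g (2 * k + 4) q * ϱ ^ (k + 1) :=
      funext fun q => hAfin q ϱ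
    rw [heq]
    refine HasDerivAt.deriv ?_
    refine HasDerivAt.fun_sum fun k _ => ?_
    have := (((hgd (2 * k + 4) p).const_mul (stmt10cA k)).mul_const (ϱ ^ (k + 1)))
    convert this using 2
  rw [hd2, hd1', hdp2, hdpA]
  -- combine the two ϱ-sums
  have hcomb : 2 * ϱ * (∑ k ∈ range N, stmt10cB k * g (2 * k + 3) p
        * (((k : ℝ) + 1) * ((k : ℝ) * ϱ ^ (k - 1))))
      - 3 * (∑ k ∈ range N, stmt10cB k * g (2 * k + 3) p * (((k : ℝ) + 1) * ϱ ^ k))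
      = ∑ k ∈ range N, stmt10cB k * (((k : ℝ) + 1) * (2 * (k : ℝ) - 3))
          * g (2 * k + 3) p * ϱ ^ k := by
    rw [Finset.mul_sum, Finset.mul_sum, ← Finset.sum_sub_distrib]
    refine Finset.sum_congr rfl fun k _ => ?_
    cases k with
    | zero => norm_num; ring
    | succ j =>
      push_cast
      rw [pow_succ]
      ring
  rw [hcomb]
  -- extend to range (N+1) and shift
  have hext : ∑ k ∈ range N, stmt10cB k * (((k : ℝ) + 1) * (2 * (k : ℝ) - 3))
        * g (2 * k + 3) p * ϱ ^ k
      = ∑ k ∈ range (N + 1), stmt10cB k * (((k : ℝ) + 1) * (2 * (k : ℝ) - 3))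
        * g (2 * k + 3) p * ϱ ^ k := by
    rw [Finset.sum_range_succ, hzero (2 * N + 3) (by omega) p]
    ring
  rw [hext, Finset.sum_range_succ']
  -- k = 0 term
  have h0 : stmt10cB 0 * (((0 : ℕ) + 1 : ℝ) * (2 * ((0 : ℕ) : ℝ) - 3)) * g (2 * 0 + 3) p * ϱ ^ 0
      = 3 / 40 * g 3 p := by
    rw [stmt10cB]
    norm_num [Nat.factorial]
  push_cast at h0 ⊢
  rw [h0]
  -- per-term coefficient identity
  have hterm : ∀ k ∈ range N,
      stmt10cB (k + 1) * ((((k : ℝ) + 1) + 1) * (2 * ((k : ℝ) + 1) - 3))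
          * g (2 * (k + 1) + 3) p * ϱ ^ (k + 1)
        - 1 / 8 * (stmt10cB k * g (2 * k + 5) p * ϱ ^ (k + 1))
      = -(1 / 36) * (stmt10cA k * g (2 * k + 5) p * ϱ ^ (k + 1)) := by
    intro k _
    have h5 : 2 * (k + 1) + 3 = 2 * k + 5 := by ring
    rw [h5]
    linear_combination (g (2 * k + 5) p * ϱ ^ (k + 1)) * stmt10_coef k
  -- assemble
  have : ∑ k ∈ range N, stmt10cB (k + 1) * ((((k : ℝ) + 1) + 1) * (2 * ((k : ℝ) + 1) - 3))
        * g (2 * (k + 1) + 3) p * ϱ ^ (k + 1)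
      - 1 / 8 * ∑ k ∈ range N, stmt10cB k * g (2 * k + 5) p * ϱ ^ (k + 1)
      = -(1 / 36) * ∑ k ∈ range N, stmt10cA k * g (2 * k + 5) p * ϱ ^ (k + 1) := by
    rw [Finset.mul_sum, Finset.mul_sum, ← Finset.sum_sub_distrib]
    exact Finset.sum_congr rfl hterm
  push_cast at this
  linear_combination this
end

section
/- For the ODE 2ϱ a'' − 3a' + (1/8)a = 9/40 with initial condition a(0) = 0, the function a(ϱ) = (3/20)ϱ cos(√ϱ/2) − (9/10)√ϱ sin(√ϱ/2) − (9/5)(cos(√ϱ/2) − 1), defined for ϱ > 0 (and extended analytically to ϱ ≥ 0), is a solution. -/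
/-!
Write `C = cos (√ϱ / 2)` and `S = √ϱ sin (√ϱ / 2)`. For `ϱ > 0` the chain rule gives
`C' = -sin (√ϱ / 2) / (4√ϱ)` and `S' = sin (√ϱ / 2) / (2√ϱ) + C / 4`. The singular terms
`sin (√ϱ / 2) / √ϱ` cancel, leaving `a' = -3/40 C - 3/80 S` and `a'' = -3/320 C`, after which
the equation is a polynomial identity in `ϱ`, `C` and `S`.
-/

open Real Filter Topology

section SqrtChainRule

variable {x : ℝ} (c : ℝ)

theorem hasDerivAt_cos_sqrt_div (hx : 0 < x) :
    HasDerivAt (fun y => cos (√y / c)) (-sin (√x / c) / (2 * c * √x)) x :=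
  ((hasDerivAt_cos _).comp x ((hasDerivAt_sqrt hx.ne').div_const c)).congr_deriv (by ring)

theorem hasDerivAt_sqrt_mul_sin_sqrt_div (hx : 0 < x) :
    HasDerivAt (fun y => √y * sin (√y / c))
      (sin (√x / c) / (2 * √x) + cos (√x / c) / (2 * c)) x := by
  have hsqrt := hasDerivAt_sqrt hx.ne'
  have hs : √x ≠ 0 := (sqrt_pos.mpr hx).ne'
  refine (hsqrt.mul ((hasDerivAt_sin _).comp x (hsqrt.div_const c))).congr_deriv ?_
  rw [Function.comp_apply]
  field_simp

end SqrtChainRule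

noncomputable def odeSolution (ϱ : ℝ) : ℝ :=
  3 / 20 * ϱ * cos (√ϱ / 2) - 9 / 10 * √ϱ * sin (√ϱ / 2) - 9 / 5 * (cos (√ϱ / 2) - 1)

noncomputable def odeSolutionDeriv (ϱ : ℝ) : ℝ :=
  -3 / 40 * cos (√ϱ / 2) - 3 / 80 * (√ϱ * sin (√ϱ / 2))

theorem odeSolution_zero : odeSolution 0 = 0 := by
  simp [odeSolution]

theorem hasDerivAt_odeSolution {ϱ : ℝ} (hϱ : 0 < ϱ) :
    HasDerivAt odeSolution (odeSolutionDeriv ϱ) ϱ := by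
  have hC := hasDerivAt_cos_sqrt_div 2 hϱ
  have h := ((((hasDerivAt_id' ϱ).const_mul (3 / 20 : ℝ)).mul hC).sub
    ((hasDerivAt_sqrt_mul_sin_sqrt_div 2 hϱ).const_mul (9 / 10 : ℝ))).sub
    ((hC.sub_const 1).const_mul (9 / 5 : ℝ))
  have hfun : odeSolution = fun y => 3 / 20 * y * cos (√y / 2)
      - 9 / 10 * (√y * sin (√y / 2)) - 9 / 5 * (cos (√y / 2) - 1) := by
    funext y
    rw [odeSolution]
    ring
  rw [hfun]
  refine h.congr_deriv ?_
  obtain ⟨s, hs, rfl⟩ : ∃ s, 0 < s ∧ ϱ = s ^ 2 :=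
    ⟨√ϱ, sqrt_pos.mpr hϱ, (sq_sqrt hϱ.le).symm⟩
  rw [odeSolutionDeriv, sqrt_sq hs.le]
  field_simp
  ring

theorem hasDerivAt_odeSolutionDeriv {ϱ : ℝ} (hϱ : 0 < ϱ) :
    HasDerivAt odeSolutionDeriv (-3 / 320 * cos (√ϱ / 2)) ϱ := by
  have hs : √ϱ ≠ 0 := (sqrt_pos.mpr hϱ).ne'
  refine (((hasDerivAt_cos_sqrt_div 2 hϱ).const_mul (-3 / 40 : ℝ)).sub
    ((hasDerivAt_sqrt_mul_sin_sqrt_div 2 hϱ).const_mul (3 / 80 : ℝ))).congr_deriv ?_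
  field_simp
  ring

theorem deriv_deriv_odeSolution {ϱ : ℝ} (hϱ : 0 < ϱ) :
    deriv (deriv odeSolution) ϱ = -3 / 320 * cos (√ϱ / 2) := by
  have hderiv : deriv odeSolution =ᶠ[𝓝 ϱ] odeSolutionDeriv :=
    eventually_of_mem (Ioi_mem_nhds hϱ) fun x hx => (hasDerivAt_odeSolution hx).deriv
  rw [hderiv.deriv_eq, (hasDerivAt_odeSolutionDeriv hϱ).deriv]

/-- The function `a(ϱ) = (3/20)ϱ cos(√ϱ/2) − (9/10)√ϱ sin(√ϱ/2) − (9/5)(cos(√ϱ/2) − 1)`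
solves `2ϱ a'' − 3a' + (1/8)a = 9/40` for `ϱ > 0`, with `a(0) = 0`. -/
theorem stmt11 (a : ℝ → ℝ)
    (ha : ∀ ϱ : ℝ, a ϱ = 3 / 20 * ϱ * Real.cos (Real.sqrt ϱ / 2)
      - 9 / 10 * Real.sqrt ϱ * Real.sin (Real.sqrt ϱ / 2)
      - 9 / 5 * (Real.cos (Real.sqrt ϱ / 2) - 1)) :
    a 0 = 0 ∧
    ∀ ϱ : ℝ, 0 < ϱ →
      2 * ϱ * deriv (deriv a) ϱ - 3 * deriv a ϱ + 1 / 8 * a ϱ = 9 / 40 := by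
  obtain rfl : a = odeSolution := funext ha
  refine ⟨odeSolution_zero, fun ϱ hϱ => ?_⟩
  rw [deriv_deriv_odeSolution hϱ, (hasDerivAt_odeSolution hϱ).deriv, odeSolution,
    odeSolutionDeriv]
  ring
end

section
/- Let α₀ : ℝ → ℝ be a polynomial in p. Define A(p,ϱ) = ϱ^{5/2} · 60 ∑_{k=0}^∞ [(k+2)(k+1)/(2^{2k}(2k+5)!)] α₀^{(2k)}(p) ϱ^k for ϱ > 0 (a finite sum). Then A solves the homogeneous equation 2ϱ A_{ϱϱ} − 3A_ϱ − (1/8)A_{pp} = 0 on ϱ > 0. -/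
/-- For `α₀` a polynomial (some iterated derivative vanishes), the function
`A(p,ϱ) = ϱ^{5/2} · 60 ∑_{k≥0} (k+2)(k+1)/(2^{2k}(2k+5)!) α₀^{(2k)}(p) ϱ^k`
solves the homogeneous equation `2ϱ A_ϱϱ − 3 A_ϱ − (1/8) A_pp = 0` on `ϱ > 0`. -/
theorem stmt14 (α₀ : ℝ → ℝ) (hα : ContDiff ℝ (⊤ : ℕ∞) α₀) (N : ℕ) (hN : deriv^[N] α₀ = 0)
    (A : ℝ → ℝ → ℝ)
    (hA : ∀ p ϱ : ℝ, A p ϱ = ϱ ^ ((5 : ℝ) / 2) * (60 * ∑' k : ℕ,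
      (((k : ℝ) + 2) * ((k : ℝ) + 1)
        / ((2 : ℝ) ^ (2 * k) * (Nat.factorial (2 * k + 5) : ℝ)))
      * deriv^[2 * k] α₀ p * ϱ ^ k)) :
    ∀ p : ℝ, ∀ ϱ : ℝ, 0 < ϱ →
      2 * ϱ * deriv (deriv (A p)) ϱ - 3 * deriv (A p) ϱ
        - 1 / 8 * deriv (fun q => deriv (fun q' => A q' ϱ) q) p = 0 := by
  classical
  -- the coefficients
  set c : ℕ → ℝ := fun k => ((k : ℝ) + 2) * ((k : ℝ) + 1)
      / ((2 : ℝ) ^ (2 * k) * (Nat.factorial (2 * k + 5) : ℝ)) with hc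
  -- iterated derivatives of α₀ vanish from N on
  have hg0 : ∀ m, N ≤ m → deriv^[m] α₀ = 0 := by
    intro m hm
    have hz : ∀ j, deriv^[j] (0 : ℝ → ℝ) = 0 := by
      intro j
      induction j with
      | zero => rfl
      | succ j ih =>
        rw [Function.iterate_succ_apply', ih]
        funext x
        simp [Pi.zero_def]
    obtain ⟨j, rfl⟩ := Nat.exists_eq_add_of_le hm
    rw [Nat.add_comm, Function.iterate_add_apply, hN, hz]
  -- each iterated derivative is differentiable with derivative the next one
  have hder : ∀ (m : ℕ) (x : ℝ), HasDerivAt (deriv^[m] α₀) (deriv^[m+1] α₀ x) x := by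
    intro m x
    have h := (ContDiff.iterate_deriv m (hα.of_le (by simp)) : ContDiff ℝ (⊤ : ℕ∞) _)
    have hd : DifferentiableAt ℝ (deriv^[m] α₀) x :=
      (h.differentiable (by simp)).differentiableAt
    simpa [Function.iterate_succ_apply'] using hd.hasDerivAt
  -- A as a finite sum
  have hA' : ∀ p ϱ : ℝ, A p ϱ = ∑ k ∈ Finset.range (N + 1),
      60 * c k * deriv^[2 * k] α₀ p * (ϱ ^ ((5 : ℝ) / 2) * ϱ ^ k) := by
    intro p ϱ
    rw [hA, tsum_eq_sum (s := Finset.range (N + 1))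
      (by
        intro k hk
        have hkN : N ≤ 2 * k := by
          simp only [Finset.mem_range, not_lt] at hk
          omega
        rw [hg0 _ hkN]
        simp)]
    rw [Finset.mul_sum, Finset.mul_sum]
    refine Finset.sum_congr rfl fun k _ => by rw [hc]; ring
  -- derivative of rpow with rewritten exponent
  have hrpow : ∀ (e e' x : ℝ), 0 < x → e - 1 = e' →
      HasDerivAt (fun y : ℝ => y ^ e) (e * x ^ e') x := by
    intro e e' x hx he
    have h := Real.hasDerivAt_rpow_const (x := x) (p := e) (Or.inl hx.ne')
    rwa [he] at h
  intro p ϱ₀ hϱ₀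
  -- function of ϱ
  have hAfun : A p = fun x : ℝ => ∑ k ∈ Finset.range (N + 1),
      60 * c k * deriv^[2 * k] α₀ p * (x ^ ((5 : ℝ) / 2) * x ^ k) :=
    funext fun x => hA' p x
  have hterm1 : ∀ (k : ℕ) (x : ℝ), 0 < x →
      HasDerivAt (fun y : ℝ => y ^ ((5 : ℝ) / 2) * y ^ k)
        (((k : ℝ) + 5 / 2) * x ^ ((k : ℝ) + 3 / 2)) x := by
    intro k x hx
    have h1 : HasDerivAt (fun y : ℝ => y ^ ((k : ℝ) + 5 / 2))
        (((k : ℝ) + 5 / 2) * x ^ ((k : ℝ) + 3 / 2)) x :=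
      hrpow ((k : ℝ) + 5 / 2) ((k : ℝ) + 3 / 2) x hx (by ring)
    refine h1.congr_of_eventuallyEq ?_
    filter_upwards [eventually_gt_nhds hx] with y hy
    rw [show (k : ℝ) + 5 / 2 = (5 : ℝ) / 2 + (k : ℝ) by ring, Real.rpow_add hy,
      Real.rpow_natCast]
  -- first ϱ-derivative
  have hAder : ∀ x : ℝ, 0 < x → HasDerivAt (A p)
      (∑ k ∈ Finset.range (N + 1),
        60 * c k * deriv^[2 * k] α₀ p * (((k : ℝ) + 5 / 2) * x ^ ((k : ℝ) + 3 / 2))) x := by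
    intro x hx
    rw [hAfun]
    exact HasDerivAt.fun_sum fun k _ => (hterm1 k x hx).const_mul _
  -- second ϱ-derivative
  have hF1der : ∀ x : ℝ, 0 < x → HasDerivAt
      (fun x : ℝ => ∑ k ∈ Finset.range (N + 1),
        60 * c k * deriv^[2 * k] α₀ p * (((k : ℝ) + 5 / 2) * x ^ ((k : ℝ) + 3 / 2)))
      (∑ k ∈ Finset.range (N + 1),
        60 * c k * deriv^[2 * k] α₀ p *
          (((k : ℝ) + 5 / 2) * (((k : ℝ) + 3 / 2) * x ^ ((k : ℝ) + 1 / 2)))) x := by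
    intro x hx
    exact HasDerivAt.fun_sum fun k _ =>
      (((hrpow ((k : ℝ) + 3 / 2) ((k : ℝ) + 1 / 2) x hx (by ring)).const_mul
        (((k : ℝ) + 5 / 2))).const_mul _)
  have hd1 : deriv (A p) ϱ₀ = ∑ k ∈ Finset.range (N + 1),
      60 * c k * deriv^[2 * k] α₀ p * (((k : ℝ) + 5 / 2) * ϱ₀ ^ ((k : ℝ) + 3 / 2)) :=
    (hAder ϱ₀ hϱ₀).deriv
  have hev : deriv (A p) =ᶠ[nhds ϱ₀] fun x : ℝ => ∑ k ∈ Finset.range (N + 1),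
      60 * c k * deriv^[2 * k] α₀ p * (((k : ℝ) + 5 / 2) * x ^ ((k : ℝ) + 3 / 2)) := by
    filter_upwards [eventually_gt_nhds hϱ₀] with x hx
    exact (hAder x hx).deriv
  have hd2 : deriv (deriv (A p)) ϱ₀ = ∑ k ∈ Finset.range (N + 1),
      60 * c k * deriv^[2 * k] α₀ p *
        (((k : ℝ) + 5 / 2) * (((k : ℝ) + 3 / 2) * ϱ₀ ^ ((k : ℝ) + 1 / 2))) :=
    hev.deriv_eq.trans (hF1der ϱ₀ hϱ₀).deriv
  -- p-derivatives
  have hpfun : (fun q' => A q' ϱ₀) = fun q' => ∑ k ∈ Finset.range (N + 1),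
      60 * c k * deriv^[2 * k] α₀ q' * (ϱ₀ ^ ((5 : ℝ) / 2) * ϱ₀ ^ k) :=
    funext fun q' => hA' q' ϱ₀
  have hpder : ∀ q : ℝ, HasDerivAt (fun q' => A q' ϱ₀)
      (∑ k ∈ Finset.range (N + 1),
        60 * c k * deriv^[2 * k + 1] α₀ q * (ϱ₀ ^ ((5 : ℝ) / 2) * ϱ₀ ^ k)) q := by
    intro q
    rw [hpfun]
    exact HasDerivAt.fun_sum fun k _ => ((hder (2 * k) q).const_mul _).mul_const _
  have hpd1 : deriv (fun q' => A q' ϱ₀) = fun q => ∑ k ∈ Finset.range (N + 1),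
      60 * c k * deriv^[2 * k + 1] α₀ q * (ϱ₀ ^ ((5 : ℝ) / 2) * ϱ₀ ^ k) :=
    funext fun q => (hpder q).deriv
  have hpder2 : HasDerivAt (fun q => ∑ k ∈ Finset.range (N + 1),
      60 * c k * deriv^[2 * k + 1] α₀ q * (ϱ₀ ^ ((5 : ℝ) / 2) * ϱ₀ ^ k))
      (∑ k ∈ Finset.range (N + 1),
        60 * c k * deriv^[2 * k + 1 + 1] α₀ p * (ϱ₀ ^ ((5 : ℝ) / 2) * ϱ₀ ^ k)) p :=
    HasDerivAt.fun_sum fun k _ => ((hder (2 * k + 1) p).const_mul _).mul_const _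
  have hpd2 : deriv (fun q => deriv (fun q' => A q' ϱ₀) q) p =
      ∑ k ∈ Finset.range (N + 1),
        60 * c k * deriv^[2 * k + 1 + 1] α₀ p * (ϱ₀ ^ ((5 : ℝ) / 2) * ϱ₀ ^ k) := by
    simp only [hpd1]
    exact hpder2.deriv
  rw [hd1, hd2, hpd2]
  rw [Finset.mul_sum, Finset.mul_sum, Finset.mul_sum, ← Finset.sum_sub_distrib,
    ← Finset.sum_sub_distrib]
  -- canonical summand forms
  set T : ℕ → ℝ := fun k => 60 * c k * deriv^[2 * k] α₀ p *
      (((k : ℝ) + 5 / 2) * (2 * (k : ℝ)) * (ϱ₀ ^ ((k : ℝ) + 1 / 2) * ϱ₀)) with hT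
  set R : ℕ → ℝ := fun k => 15 / 2 * c k * deriv^[2 * k + 1 + 1] α₀ p *
      (ϱ₀ ^ ((k : ℝ) + 1 / 2) * ϱ₀ * ϱ₀) with hR
  have hsummand : ∀ k ∈ Finset.range (N + 1),
      2 * ϱ₀ * (60 * c k * deriv^[2 * k] α₀ p *
          (((k : ℝ) + 5 / 2) * (((k : ℝ) + 3 / 2) * ϱ₀ ^ ((k : ℝ) + 1 / 2))))
        - 3 * (60 * c k * deriv^[2 * k] α₀ p *
          (((k : ℝ) + 5 / 2) * ϱ₀ ^ ((k : ℝ) + 3 / 2)))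
        - 1 / 8 * (60 * c k * deriv^[2 * k + 1 + 1] α₀ p * (ϱ₀ ^ ((5 : ℝ) / 2) * ϱ₀ ^ k))
        = T k - R k := by
    intro k _
    have e1 : ϱ₀ ^ ((k : ℝ) + 3 / 2) = ϱ₀ ^ ((k : ℝ) + 1 / 2) * ϱ₀ := by
      rw [show (k : ℝ) + 3 / 2 = ((k : ℝ) + 1 / 2) + 1 by ring, Real.rpow_add hϱ₀,
        Real.rpow_one]
    have e2 : ϱ₀ ^ ((5 : ℝ) / 2) * ϱ₀ ^ k = ϱ₀ ^ ((k : ℝ) + 1 / 2) * ϱ₀ * ϱ₀ := by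
      have h' : ϱ₀ ^ ((k : ℝ) + 1 / 2) * ϱ₀ * ϱ₀
          = ϱ₀ ^ ((k : ℝ) + 1 / 2) * ϱ₀ ^ (1 : ℝ) * ϱ₀ ^ (1 : ℝ) := by
        rw [Real.rpow_one]
      rw [h', ← Real.rpow_add hϱ₀, ← Real.rpow_add hϱ₀,
        show ((k : ℝ) + 1 / 2) + 1 + 1 = (5 : ℝ) / 2 + (k : ℝ) by ring,
        Real.rpow_add hϱ₀, Real.rpow_natCast]
    rw [e1, e2, hT, hR]
    ring
  rw [Finset.sum_congr rfl hsummand, Finset.sum_sub_distrib, sub_eq_zero]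
  -- reindex the left sum and match term by term
  have hT0 : T 0 = 0 := by simp [hT]
  have hRN : R N = 0 := by
    have h0 : deriv^[2 * N + 1 + 1] α₀ p = 0 := by
      rw [hg0 _ (by omega)]; rfl
    simp only [hR]
    rw [h0]
    ring
  rw [Finset.sum_range_succ' T N, Finset.sum_range_succ R N, hT0, hRN, add_zero, add_zero]
  refine Finset.sum_congr rfl fun k _ => ?_
  -- the coefficient identity
  have hidx : 2 * (k + 1) = 2 * k + 1 + 1 := by ring
  have hfac : ((2 * (k + 1) + 5).factorial : ℝ) =
      (2 * (k : ℝ) + 7) * ((2 * (k : ℝ) + 6) * ((2 * k + 5).factorial : ℝ)) := by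
    rw [show 2 * (k + 1) + 5 = (2 * k + 6) + 1 by ring, Nat.factorial_succ,
      show 2 * k + 6 = (2 * k + 5) + 1 by ring, Nat.factorial_succ]
    push_cast
    ring
  have hpow2 : ((2 : ℝ)) ^ (2 * (k + 1)) = 4 * (2 : ℝ) ^ (2 * k) := by
    rw [show 2 * (k + 1) = 2 * k + 2 by ring, pow_add]
    ring
  have hexp : ϱ₀ ^ (((k + 1 : ℕ) : ℝ) + 1 / 2) = ϱ₀ ^ ((k : ℝ) + 1 / 2) * ϱ₀ := by
    rw [show ((k + 1 : ℕ) : ℝ) + 1 / 2 = ((k : ℝ) + 1 / 2) + 1 by push_cast; ring,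
      Real.rpow_add hϱ₀, Real.rpow_one]
  have h1 : ((2 : ℝ)) ^ (2 * k) ≠ 0 := by positivity
  have h2 : (((2 * k + 5).factorial : ℝ)) ≠ 0 :=
    Nat.cast_ne_zero.mpr (Nat.factorial_ne_zero _)
  have h3 : (2 * (k : ℝ) + 7) ≠ 0 := by positivity
  have h4 : (2 * (k : ℝ) + 6) ≠ 0 := by positivity
  simp only [hT, hR, hc]
  rw [hfac, hpow2, hexp, hidx]
  push_cast
  field_simp
  ring
end
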